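/- arXiv:2212.02943 — 2 statements merged into one kernel-verified Lean document; each statement's English description precedes it below -/
import Mathlib

section
/- Let t ≥ 1 and let G = S_3 × (Z/2Z)^t. Then d(G) = t + 1 and m(G) = t + 2. -/
/-!
The sign and the identity map `S₃ × C₂ᵗ` onto `ℤˣ × C₂ᵗ`, an `𝔽₂`-vector space of dimension
`t + 1`, so at least `t + 1` generators are needed. They suffice because a 3-cycle `c` and a
coordinate vector `e₀` have coprime orders, so `(c, e₀)` does the work of `(c, 1)` and `(1, e₀)`.

Adding the elements of an independent set one at a time gives a strictly increasing chain of
subgroups, each of index at least `2` in the next, so an independent generating set `S` satisfies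
`2 ^ |S| ≤ |G| = 6 · 2 ^ t < 2 ^ (t + 3)`. Independent generating sets of two groups combine to
one of their product, and `{c, (0 1)}` and the coordinate vectors give one of size `2 + t`.
-/

def IndepGen {G : Type*} [Group G] (S : Set G) : Prop :=
  Subgroup.closure S = ⊤ ∧ ∀ s ∈ S, Subgroup.closure (S \ {s}) < ⊤

noncomputable def mGen (G : Type*) [Group G] : ℕ :=
  sSup {n | ∃ S : Finset G, IndepGen (S : Set G) ∧ S.card = n}

open Subgroup

section IndepGen

variable {G : Type*} [Group G]

theorem Subgroup.two_mul_card_le_card_of_lt [Finite G] {H K : Subgroup G} (h : H < K) :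
    2 * Nat.card H ≤ Nat.card K := by
  obtain ⟨k, hk⟩ := card_dvd_of_le h.le
  have hk0 : k ≠ 0 := by
    rintro rfl
    exact Nat.card_pos.ne' (by rw [hk, mul_zero])
  have hk1 : k ≠ 1 := by
    rintro rfl
    exact h.ne (eq_of_le_of_card_ge h.le (by rw [hk, mul_one]))
  rw [hk, mul_comm]
  exact Nat.mul_le_mul_left _ (by omega)

theorem two_pow_card_le_card_closure [Finite G] (S : Finset G)
    (hS : ∀ s ∈ S, s ∉ closure ((S : Set G) \ {s})) :
    2 ^ S.card ≤ Nat.card (closure (S : Set G)) := by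
  classical
  induction S using Finset.induction_on with
  | empty => simp
  | insert a T haT ih =>
    simp only [Finset.coe_insert] at hS ⊢
    have hT : ∀ s ∈ T, s ∉ closure ((T : Set G) \ {s}) := fun s hs hmem =>
      hS s (Finset.mem_insert_of_mem hs)
        (closure_mono (Set.sdiff_subset_sdiff_left (Set.subset_insert a _)) hmem)
    have hlt : closure (T : Set G) < closure (insert a (T : Set G)) := by
      refine lt_of_le_of_ne (closure_mono (Set.subset_insert a _)) fun heq => ?_
      have ha : a ∈ closure (T : Set G) := heq ▸ subset_closure (Set.mem_insert a _)
      refine hS a (Finset.mem_insert_self a T) (closure_mono (fun x hx => ?_) ha)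
      exact ⟨Set.mem_insert_of_mem a hx, fun hxa => haT (hxa ▸ hx)⟩
    calc 2 ^ (insert a T).card = 2 * 2 ^ T.card := by
          rw [Finset.card_insert_of_notMem haT, pow_succ']
      _ ≤ 2 * Nat.card (closure (T : Set G)) := Nat.mul_le_mul_left 2 (ih hT)
      _ ≤ _ := two_mul_card_le_card_of_lt hlt

theorem indepGen_iff {S : Set G} :
    IndepGen S ↔ closure S = ⊤ ∧ ∀ s ∈ S, s ∉ closure (S \ {s}) := by
  refine and_congr_right fun hS => forall₂_congr fun s hs => ⟨fun hlt hmem => ?_, fun hnot => ?_⟩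
  · refine hlt.ne (top_le_iff.mp (hS ▸ (closure_le _).mpr fun x hx => ?_))
    by_cases hxs : x = s
    · exact hxs ▸ hmem
    · exact subset_closure ⟨hx, hxs⟩
  · exact lt_top_iff_ne_top.mpr fun htop => hnot (htop ▸ mem_top s)

theorem IndepGen.one_notMem {S : Set G} (h : IndepGen S) : (1 : G) ∉ S :=
  fun h1 => (indepGen_iff.mp h).2 1 h1 (one_mem _)

theorem IndepGen.two_pow_card_le_card [Finite G] {S : Finset G} (h : IndepGen (S : Set G)) :
    2 ^ S.card ≤ Nat.card G := by
  obtain ⟨hgen, hind⟩ := indepGen_iff.mp h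
  simpa [hgen] using two_pow_card_le_card_closure S hind

theorem indepGen_pair_of_not_commute {a b : G} (hgen : closure {a, b} = ⊤)
    (hab : ¬Commute a b) : IndepGen ({a, b} : Set G) := by
  have hne : a ≠ b := by
    rintro rfl
    exact hab (Commute.refl a)
  have notMem : ∀ {x y : G}, ¬Commute x y → x ∉ closure {y} := by
    intro x y hxy hx
    obtain ⟨n, rfl⟩ := mem_closure_singleton.mp hx
    exact hxy ((Commute.refl y).zpow_left n)
  refine indepGen_iff.mpr ⟨hgen, ?_⟩
  rintro s (rfl | rfl)
  · rw [Set.pair_sdiff_left hne]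
    exact notMem hab
  · rw [Set.pair_sdiff_right hne]
    exact notMem fun h => hab h.symm

end IndepGen

section Prod

variable {A B : Type*} [Group A] [Group B]

theorem Subgroup.eq_top_of_inl_inr_mem {K : Subgroup (A × B)} {X : Set A} {Y : Set B}
    (hX : closure X = ⊤) (hY : closure Y = ⊤) (hXK : ∀ x ∈ X, ((x, 1) : A × B) ∈ K)
    (hYK : ∀ y ∈ Y, ((1, y) : A × B) ∈ K) : K = ⊤ := by
  have hA : closure X ≤ K.comap (MonoidHom.inl A B) := (closure_le _).mpr hXK
  have hB : closure Y ≤ K.comap (MonoidHom.inr A B) := (closure_le _).mpr hYK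
  refine eq_top_iff.mpr fun ⟨a, b⟩ _ => ?_
  rw [← mul_one a, ← one_mul b, ← Prod.mk_mul_mk]
  exact mul_mem (hA (hX ▸ mem_top a)) (hB (hY ▸ mem_top b))

theorem IndepGen.prod {S : Set A} {T : Set B} (hS : IndepGen S) (hT : IndepGen T) :
    IndepGen (MonoidHom.inl A B '' S ∪ MonoidHom.inr A B '' T) := by
  rw [indepGen_iff] at hS hT ⊢
  refine ⟨eq_top_of_inl_inr_mem hS.1 hT.1 (fun x hx => subset_closure (Or.inl ⟨x, hx, rfl⟩))
    (fun y hy => subset_closure (Or.inr ⟨y, hy, rfl⟩)), ?_⟩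
  rintro _ (⟨s, hs, rfl⟩ | ⟨t, ht, rfl⟩) hmem
  · refine hS.2 s hs (mem_prod.mp ((closure_le ((closure (S \ {s})).prod ⊤)).mpr ?_ hmem)).1
    rintro _ ⟨⟨s', hs', rfl⟩ | ⟨t', -, rfl⟩, hne⟩
    · exact mem_prod.mpr ⟨subset_closure ⟨hs', fun h => hne (h ▸ rfl)⟩, mem_top _⟩
    · exact mem_prod.mpr ⟨one_mem _, mem_top _⟩
  · refine hT.2 t ht
      (mem_prod.mp ((closure_le ((⊤ : Subgroup A).prod (closure (T \ {t})))).mpr ?_ hmem)).2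
    rintro _ ⟨⟨s', -, rfl⟩ | ⟨t', ht', rfl⟩, hne⟩
    · exact mem_prod.mpr ⟨mem_top _, one_mem _⟩
    · exact mem_prod.mpr ⟨mem_top _, subset_closure ⟨ht', fun h => hne (h ▸ rfl)⟩⟩

theorem Finset.card_image_inl_union_image_inr [DecidableEq A] [DecidableEq B] {S : Finset A}
    {T : Finset B} (hS : 1 ∉ S) :
    (S.image (MonoidHom.inl A B) ∪ T.image (MonoidHom.inr A B)).card = S.card + T.card := by
  rw [card_union_of_disjoint, card_image_of_injective _ fun _ _ h => congrArg Prod.fst h,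
    card_image_of_injective _ fun _ _ h => congrArg Prod.snd h]
  simp only [disjoint_left, mem_image, not_exists, not_and]
  rintro _ ⟨s, hs, rfl⟩ t - h
  have hs1 : s = 1 := (congrArg Prod.fst h).symm
  exact hS (hs1 ▸ hs)

end Prod

section Pi

variable {ι M : Type*} [DecidableEq ι] [Group M]

theorem Subgroup.eq_top_of_mulSingle_mem [Finite ι] {K : Subgroup (ι → M)} {X : Set M}
    (hX : closure X = ⊤) (hXK : ∀ i, ∀ x ∈ X, Pi.mulSingle i x ∈ K) : K = ⊤ :=
  eq_top_iff.mpr fun f _ => pi_mem_of_mulSingle_mem f fun i =>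
    (closure_le (K.comap (MonoidHom.mulSingle (fun _ => M) i))).mpr (hXK i) (hX ▸ mem_top (f i))

theorem Pi.mulSingle_left_injective {g : M} (hg : g ≠ 1) :
    Function.Injective fun i : ι => Pi.mulSingle i g := by
  intro i j h
  by_contra hij
  have := congrFun h i
  simp only [Pi.mulSingle_eq_same, Pi.mulSingle_eq_of_ne hij] at this
  exact hg this

theorem indepGen_range_mulSingle [Finite ι] {g : M} (hg : closure {g} = ⊤) (hg1 : g ≠ 1) :
    IndepGen (Set.range fun i : ι => Pi.mulSingle i g) := by
  refine indepGen_iff.mpr ⟨eq_top_of_mulSingle_mem hg ?_, ?_⟩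
  · rintro i x rfl
    exact subset_closure ⟨i, rfl⟩
  · rintro _ ⟨i, rfl⟩ hmem
    have hker : closure ((Set.range fun j : ι => Pi.mulSingle j g) \ {Pi.mulSingle i g}) ≤
        (Pi.evalMonoidHom (fun _ => M) i).ker := by
      refine (closure_le _).mpr ?_
      rintro _ ⟨⟨j, rfl⟩, hne⟩
      have hji : i ≠ j := by
        rintro rfl
        exact hne rfl
      simp [Pi.mulSingle_eq_of_ne hji]
    exact hg1 (by simpa using hker hmem)

end Pi

theorem card_le_pow_rank_of_pow_eq_one {H : Type*} [CommGroup H] [Finite H] {p : ℕ}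
    [Fact p.Prime] (hH : ∀ x : H, x ^ p = 1) : Nat.card H ≤ p ^ Group.rank H := by
  have : Module (ZMod p) (Additive H) :=
    AddCommGroup.zmodModule fun x => congrArg Additive.ofMul (hH x.toMul)
  obtain ⟨S, hcard, hS⟩ := Group.rank_spec H
  have hmem : ∀ y ∈ closure (S : Set H), (Additive.ofMul y : Additive H) ∈
      Submodule.span (ZMod p) (Set.range fun s : S => Additive.ofMul (s : H)) := by
    intro y hy
    induction hy using closure_induction with
    | mem y hy => exact Submodule.subset_span ⟨⟨y, hy⟩, rfl⟩
    | one => exact zero_mem _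
    | mul y z _ _ hy hz => exact add_mem hy hz
    | inv y _ hy => exact neg_mem hy
  have hspan : Submodule.span (ZMod p) (Set.range fun s : S => Additive.ofMul (s : H)) = ⊤ :=
    eq_top_iff.mpr fun x _ => hmem x.toMul (hS ▸ mem_top _)
  have hfin := finrank_le_of_span_eq_top hspan
  rw [Fintype.card_coe, hcard] at hfin
  calc Nat.card H = Nat.card (ZMod p) ^ Module.finrank (ZMod p) (Additive H) :=
        Module.natCard_eq_pow_finrank (V := Additive H)
    _ = p ^ Module.finrank (ZMod p) (Additive H) := by rw [Nat.card_zmod]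
    _ ≤ p ^ Group.rank H := Nat.pow_le_pow_right (Fact.out : p.Prime).pos hfin

theorem ZMod.closure_ofAdd_one (n : ℕ) :
    Subgroup.closure {Multiplicative.ofAdd (1 : ZMod n)} = ⊤ :=
  eq_top_iff.mpr fun x _ => mem_closure_singleton.mpr
    ⟨(x.toAdd.cast : ℤ), by rw [← ofAdd_zsmul, zsmul_one, ZMod.intCast_zmod_cast]; rfl⟩

open Equiv Perm in
theorem Equiv.Perm.closure_finRotate_swap_zero_one {n : ℕ} (hn : (n + 2).Prime) :
    Subgroup.closure {finRotate (n + 2), swap 0 1} = ⊤ :=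
  closure_prime_cycle_swap (by rwa [Fintype.card_fin]) isCycle_finRotate support_finRotate
    ⟨0, 1, Fin.zero_ne_one, rfl⟩

section PermFinThreeProd

open Equiv

theorem card_add_one_le_rank_perm_prod {α ι : Type*} [Fintype α] [DecidableEq α] [Nontrivial α]
    [Fintype ι] : Fintype.card ι + 1 ≤ Group.rank (Perm α × (ι → Multiplicative (ZMod 2))) := by
  have hsurj : Function.Surjective
      (Perm.sign.prodMap (MonoidHom.id (ι → Multiplicative (ZMod 2)))) :=
    (Perm.sign_surjective α).prodMap Function.surjective_id
  have hsq : ∀ x : ℤˣ × (ι → Multiplicative (ZMod 2)), x ^ 2 = 1 := by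
    have hc : ∀ a : Multiplicative (ZMod 2), a ^ 2 = 1 := by decide
    exact fun ⟨u, f⟩ => Prod.ext (Int.units_sq u) (funext fun i => hc (f i))
  have hcard : Nat.card (ℤˣ × (ι → Multiplicative (ZMod 2))) = 2 ^ (Fintype.card ι + 1) := by
    simp [Nat.card_prod, Nat.card_fun, pow_succ, mul_comm]
  have h := card_le_pow_rank_of_pow_eq_one hsq
  rw [hcard] at h
  exact ((Nat.pow_le_pow_iff_right one_lt_two).mp h).trans (Group.rank_le_of_surjective _ hsurj)

theorem rank_perm_fin_three_prod_le {t : ℕ} (ht : 1 ≤ t) :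
    Group.rank (Perm (Fin 3) × (Fin t → Multiplicative (ZMod 2))) ≤ t + 1 := by
  classical
  have hne : Multiplicative.ofAdd (1 : ZMod 2) ≠ 1 := by decide
  set e : Fin t → Fin t → Multiplicative (ZMod 2) :=
    fun i => Pi.mulSingle i (Multiplicative.ofAdd 1)
  set u : Fin t → Perm (Fin 3) × (Fin t → Multiplicative (ZMod 2)) :=
    fun i => (if (i : ℕ) = 0 then finRotate 3 else 1, e i)
  set S := insert (swap 0 1, 1) (Finset.univ.image u)
  have hu_inj : Function.Injective u := fun i j h =>
    Pi.mulSingle_left_injective hne (congrArg Prod.snd h)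
  have hcard : S.card ≤ t + 1 := (Finset.card_insert_le _ _).trans (by
    rw [Finset.card_image_of_injective _ hu_inj, Finset.card_univ, Fintype.card_fin])
  have hu : ∀ i, u i ∈ Subgroup.closure (S : Set _) := fun i => subset_closure (by simp [S])
  let i₀ : Fin t := ⟨0, ht⟩
  have hu₀ : u i₀ = (finRotate 3, e i₀) := by simp [u, i₀]
  have hc : finRotate 3 ^ 3 = 1 := by decide
  have he : e i₀ ^ 2 = 1 := by
    rw [← Pi.mulSingle_pow, show Multiplicative.ofAdd (1 : ZMod 2) ^ 2 = 1 by decide,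
      Pi.mulSingle_one]
  have h3 : u i₀ ^ 3 = (1, e i₀) := by rw [hu₀, Prod.pow_mk, hc, pow_succ, he, one_mul]
  have h4 : u i₀ ^ 4 = (finRotate 3, 1) := by
    rw [hu₀, Prod.pow_mk, pow_succ, hc, one_mul, show 4 = 2 * 2 from rfl, pow_mul, he, one_pow]
  refine (Group.rank_le (eq_top_of_inl_inr_mem
    (Perm.closure_finRotate_swap_zero_one Nat.prime_three)
    (indepGen_range_mulSingle (ZMod.closure_ofAdd_one 2) hne).1 ?_ ?_)).trans hcard
  · rintro x (rfl | rfl)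
    · exact h4 ▸ pow_mem (hu i₀) 4
    · exact subset_closure (by simp [S])
  · rintro _ ⟨i, rfl⟩
    by_cases hi : (i : ℕ) = 0
    · obtain rfl : i = i₀ := Fin.ext hi
      exact h3 ▸ pow_mem (hu i₀) 3
    · have : u i = (1, e i) := by simp [u, hi]
      exact this ▸ hu i

theorem exists_indepGen_perm_fin_three_prod (t : ℕ) :
    ∃ S : Finset (Perm (Fin 3) × (Fin t → Multiplicative (ZMod 2))),
      IndepGen (S : Set (Perm (Fin 3) × (Fin t → Multiplicative (ZMod 2)))) ∧ S.card = t + 2 := by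
  classical
  have hne : Multiplicative.ofAdd (1 : ZMod 2) ≠ 1 := by decide
  set S₃ : Finset (Perm (Fin 3)) := {finRotate 3, swap 0 1}
  set E : Finset (Fin t → Multiplicative (ZMod 2)) :=
    Finset.univ.image fun i => Pi.mulSingle i (Multiplicative.ofAdd 1)
  have hS₃ : IndepGen (S₃ : Set (Perm (Fin 3))) := by
    rw [Finset.coe_pair]
    refine indepGen_pair_of_not_commute (Perm.closure_finRotate_swap_zero_one Nat.prime_three) ?_
    unfold Commute SemiconjBy
    decide
  have hE : IndepGen (E : Set (Fin t → Multiplicative (ZMod 2))) := by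
    rw [Finset.coe_image, Finset.coe_univ, Set.image_univ]
    exact indepGen_range_mulSingle (ZMod.closure_ofAdd_one 2) hne
  refine ⟨S₃.image (MonoidHom.inl _ _) ∪ E.image (MonoidHom.inr _ _), ?_, ?_⟩
  · rw [Finset.coe_union, Finset.coe_image, Finset.coe_image]
    exact hS₃.prod hE
  · rw [Finset.card_image_inl_union_image_inr hS₃.one_notMem, Finset.card_pair (by decide),
      Finset.card_image_of_injective _ (Pi.mulSingle_left_injective hne), Finset.card_univ,
      Fintype.card_fin, add_comm]

theorem IndepGen.card_le_of_perm_fin_three_prod {t : ℕ}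
    {S : Finset (Perm (Fin 3) × (Fin t → Multiplicative (ZMod 2)))}
    (h : IndepGen (S : Set (Perm (Fin 3) × (Fin t → Multiplicative (ZMod 2))))) :
    S.card ≤ t + 2 := by
  have hG : Nat.card (Perm (Fin 3) × (Fin t → Multiplicative (ZMod 2))) = 6 * 2 ^ t := by
    simp [Fintype.card_perm, Nat.factorial]
  have hS := h.two_pow_card_le_card
  rw [hG] at hS
  have hlt : 2 ^ S.card < 2 ^ (t + 3) := by
    rw [pow_add]
    linarith [Nat.two_pow_pos t]
  have := (Nat.pow_lt_pow_iff_right one_lt_two).mp hlt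
  omega

end PermFinThreeProd

theorem sym3_times_elementary_abelian_two (t : ℕ) (ht : 1 ≤ t) :
    Group.rank (Equiv.Perm (Fin 3) × (Fin t → Multiplicative (ZMod 2))) = t + 1 ∧
    mGen (Equiv.Perm (Fin 3) × (Fin t → Multiplicative (ZMod 2))) = t + 2 := by
  refine ⟨le_antisymm (rank_perm_fin_three_prod_le ht) ?_, ?_⟩
  · simpa using card_add_one_le_rank_perm_prod (α := Fin 3) (ι := Fin t)
  · obtain ⟨S, hS, hcard⟩ := exists_indepGen_perm_fin_three_prod t
    refine IsGreatest.csSup_eq ⟨⟨S, hS, hcard⟩, ?_⟩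
    rintro n ⟨T, hT, rfl⟩
    exact hT.card_le_of_perm_fin_three_prod
end

section
/- Let G be a finite group that is not simple and has a unique minimal normal subgroup A which is nonabelian. Then any chief series of G has at least 2 non-Frattini factors and at least 1 nonabelian factor. -/
/-!
The first term of the series is forced to be `A`, since `A` lies in every nontrivial normal
subgroup. Being a nonabelian minimal normal subgroup, `A` is perfect, so it is not solvable and
cannot lie in the nilpotent Frattini subgroup: the first factor is neither Frattini nor abelian.
The last factor `G/Y` is never Frattini, since `Y` lies in a maximal subgroup. As `G` is not
simple, the series has length at least two, so these two factors are distinct.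
-/

/-- A chief factor `X/Y` is Frattini iff `X` is contained in every maximal subgroup
of `G` containing `Y` (equivalently `X/Y ≤ Frat(G/Y)`). -/
def IsFrattiniFactor {G : Type*} [Group G] (Y X : Subgroup G) : Prop :=
  ∀ M : Subgroup G, IsCoatom M → Y ≤ M → X ≤ M

section

variable {G : Type*} [Group G]

theorem isFrattiniFactor_bot_iff {X : Subgroup G} : IsFrattiniFactor ⊥ X ↔ X ≤ frattini G :=
  ⟨fun h ↦ le_iInf₂ fun M hM ↦ h M hM bot_le,
    fun h _ hM _ ↦ h.trans (frattini_le_coatom hM)⟩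

theorem not_isFrattiniFactor_top [IsCoatomic (Subgroup G)] {Y : Subgroup G}
    (hY : Y ≠ ⊤) : ¬ IsFrattiniFactor Y ⊤ := by
  obtain ⟨M, hM, hYM⟩ := (eq_top_or_exists_le_coatom Y).resolve_left hY
  exact fun h ↦ hM.1 (top_le_iff.mp (h M hM hYM))

theorem Subgroup.exists_mul_mul_inv_mul_inv_ne_one {A : Subgroup G}
    (h : ¬ ∀ a b : A, a * b = b * a) : ∃ x ∈ A, ∃ y ∈ A, x * y * x⁻¹ * y⁻¹ ≠ 1 := by
  push Not at h
  obtain ⟨⟨a, ha⟩, ⟨b, hb⟩, hab⟩ := h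
  refine ⟨a, ha, b, hb, fun h ↦ hab (Subtype.ext ?_)⟩
  rwa [← commutatorElement_def, commutatorElement_eq_one_iff_mul_comm] at h

theorem Subgroup.commutator_ne_bot_of_mem {A : Subgroup G} {x y : G} (hx : x ∈ A) (hy : y ∈ A)
    (hxy : x * y * x⁻¹ * y⁻¹ ≠ 1) : ⁅A, A⁆ ≠ ⊥ := fun h ↦
  hxy (by simpa [h, commutatorElement_def] using Subgroup.commutator_mem_commutator hx hy)

theorem Subgroup.commutator_self_eq_of_minimal_normal {A : Subgroup G} [A.Normal]
    (hmin : ∀ N : Subgroup G, N.Normal → N ≠ ⊥ → N ≤ A → A ≤ N) (hA : ⁅A, A⁆ ≠ ⊥) :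
    ⁅A, A⁆ = A :=
  le_antisymm (Subgroup.commutator_le_left A A)
    (hmin _ inferInstance hA (Subgroup.commutator_le_left A A))

theorem Subgroup.not_isSolvable_of_commutator_self_eq {A : Subgroup G} (hA : A ≠ ⊥)
    (hperfect : ⁅A, A⁆ = A) : ¬ Group.IsSolvable A := by
  intro _
  have : Nontrivial A := (Subgroup.nontrivial_iff_ne_bot A).mpr hA
  have hlt := Group.IsSolvable.commutator_lt_top_of_nontrivial A
  rw [← Subgroup.map_subtype_lt_map_subtype, _root_.commutator_def, Subgroup.map_commutator,
    ← MonoidHom.range_eq_map, Subgroup.range_subtype, hperfect] at hlt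
  exact hlt.ne rfl

theorem Subgroup.not_le_frattini_of_commutator_self_eq [Finite G] {A : Subgroup G}
    (hA : A ≠ ⊥) (hperfect : ⁅A, A⁆ = A) : ¬ A ≤ frattini G := fun hle ↦
  haveI := frattini_nilpotent (G := G)
  A.not_isSolvable_of_commutator_self_eq hA hperfect
    (Group.isSolvable_of_isSolvable_injective (Subgroup.inclusion_injective hle))

theorem two_le_length_of_chief_series [Nontrivial G] (hnotsimple : ¬ IsSimpleGroup G)
    {n : ℕ} {c : Fin (n + 1) → Subgroup G} (h0 : c 0 = ⊥) (hlast : c (Fin.last n) = ⊤)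
    (hchief : ∀ i : Fin n, ∀ N : Subgroup G, N.Normal → c i.castSucc ≤ N → N ≤ c i.succ →
      N = c i.castSucc ∨ N = c i.succ) :
    2 ≤ n := by
  match n, c, hchief with
  | 0, c, _ => exact absurd (h0.symm.trans hlast) bot_ne_top
  | 1, c, hchief =>
    refine absurd ⟨fun N hN ↦ ?_⟩ hnotsimple
    simpa [h0, ← hlast] using hchief 0 N hN (by simp [h0]) (le_top.trans_eq hlast.symm)
  | _ + 2, _, _ => omega

end

theorem chief_series_of_monolithic_nonabelian_general
    (G : Type*) [Group G] [Finite G]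
    (hnotsimple : ¬ IsSimpleGroup G)
    (A : Subgroup G) (hAnorm : A.Normal) (hAne : A ≠ ⊥)
    (hmin : ∀ N : Subgroup G, N.Normal → N ≠ ⊥ → A ≤ N)
    (hna : ¬ ∀ a b : A, a * b = b * a)
    (n : ℕ) (c : Fin (n + 1) → Subgroup G)
    (h0 : c 0 = ⊥) (hlast : c (Fin.last n) = ⊤)
    (hnorm : ∀ i, (c i).Normal)
    (hchief : ∀ i : Fin n, c i.castSucc < c i.succ ∧
      ∀ N : Subgroup G, N.Normal → c i.castSucc ≤ N → N ≤ c i.succ →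
        N = c i.castSucc ∨ N = c i.succ) :
    2 ≤ Nat.card {i : Fin n // ¬ IsFrattiniFactor (c i.castSucc) (c i.succ)} ∧
    1 ≤ Nat.card {i : Fin n //
      ∃ x ∈ c i.succ, ∃ y ∈ c i.succ, x * y * x⁻¹ * y⁻¹ ∉ c i.castSucc} := by
  obtain ⟨x, hx, y, hy, hxy⟩ := A.exists_mul_mul_inv_mul_inv_ne_one hna
  have hperfect : ⁅A, A⁆ = A := A.commutator_self_eq_of_minimal_normal
    (fun N hN hN' _ ↦ hmin N hN hN') (A.commutator_ne_bot_of_mem hx hy hxy)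
  have : Nontrivial G := Subgroup.nontrivial_iff.mp ⟨⊥, A, hAne.symm⟩
  obtain ⟨m, rfl⟩ : ∃ m, n = m + 2 :=
    ⟨n - 2, by
      have := two_le_length_of_chief_series hnotsimple h0 hlast (hchief · |>.2)
      omega⟩
  have hfirst : c (0 : Fin (m + 2)).succ = A := by
    have hchief0 := hchief 0
    rw [Fin.castSucc_zero, h0] at hchief0
    exact ((hchief0.2 A hAnorm bot_le (hmin _ (hnorm _) hchief0.1.ne')).resolve_left hAne).symm
  have hfirst_nonFrattini :
      ¬ IsFrattiniFactor (c (0 : Fin (m + 2)).castSucc) (c (0 : Fin (m + 2)).succ) := by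
    rw [Fin.castSucc_zero, h0, hfirst, isFrattiniFactor_bot_iff]
    exact A.not_le_frattini_of_commutator_self_eq hAne hperfect
  have hlast_nonFrattini :
      ¬ IsFrattiniFactor (c (Fin.last (m + 1)).castSucc) (c (Fin.last (m + 1)).succ) := by
    have hlt := (hchief (Fin.last (m + 1))).1
    rw [Fin.succ_last, hlast] at hlt ⊢
    exact not_isFrattiniFactor_top hlt.ne
  constructor
  · exact Finite.one_lt_card_iff_nontrivial.mpr
      ⟨⟨0, hfirst_nonFrattini⟩, ⟨Fin.last _, hlast_nonFrattini⟩, by simp [Fin.ext_iff]⟩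
  · refine Nat.card_pos_iff.mpr ⟨⟨0, x, hfirst ▸ hx, y, hfirst ▸ hy, ?_⟩, inferInstance⟩
    rwa [Fin.castSucc_zero, h0, Subgroup.mem_bot]

theorem chief_series_of_monolithic_nonabelian
    (G : Type*) [Group G] [Finite G]
    (hnotsimple : ¬ IsSimpleGroup G)
    (A : Subgroup G) (hAnorm : A.Normal) (hAne : A ≠ ⊥)
    (hmin : ∀ N : Subgroup G, N.Normal → N ≠ ⊥ → A ≤ N)
    (hna : ¬ ∀ a b : A, a * b = b * a)
    (n : ℕ) (c : Fin (n + 1) → Subgroup G)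
    (hmono : Monotone c) (h0 : c 0 = ⊥) (hlast : c (Fin.last n) = ⊤)
    (hnorm : ∀ i, (c i).Normal)
    (hchief : ∀ i : Fin n, c i.castSucc < c i.succ ∧
      ∀ N : Subgroup G, N.Normal → c i.castSucc ≤ N → N ≤ c i.succ →
        N = c i.castSucc ∨ N = c i.succ) :
    2 ≤ Nat.card {i : Fin n // ¬ IsFrattiniFactor (c i.castSucc) (c i.succ)} ∧
    1 ≤ Nat.card {i : Fin n //
      ∃ x ∈ c i.succ, ∃ y ∈ c i.succ, x * y * x⁻¹ * y⁻¹ ∉ c i.castSucc} :=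
  chief_series_of_monolithic_nonabelian_general G hnotsimple A hAnorm hAne hmin hna n c h0 hlast
    hnorm hchief
end
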